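/- arXiv:2310.00229 — 2 statements merged into one kernel-verified Lean document; each statement's English description precedes it below -/
import Mathlib

section
/- (Upper perturbation bound for SMDP value estimates.) Suppose 0 ≤ γ < 1, and (v_k), (γ_k), (v̂_k), (γ̂_k) are sequences with 0 ≤ v_k ≤ v_max(1−γ), 0 ≤ γ_k, γ_k + ε_γ ≤ γ, v̂_k ≤ v_k + ε_v·v_max, and γ̂_k ≤ γ_k + ε_γ, with v̂_k, γ̂_k ≥ 0. Then ∑_{k=0}^∞ v̂_k ∏_{i=0}^{k-1} γ̂_i ≤ ∑_{k=0}^∞ v_k ∏_{i=0}^{k-1} γ_i + ε_v·v_max/(1−γ) + ε_γ·v_max/(1−γ)². -/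
/-!
Each perturbed discount `γ̂ᵢ` exceeds `γᵢ` by at most `ε_γ`, and all of them are at most `γ`, so
changing the `k` factors of the discount product one at a time gives
`∏_{i<k} γ̂ᵢ ≤ ∏_{i<k} γᵢ + ε_γ k γ^(k-1)`, while `∏_{i<k} γ̂ᵢ ≤ γ^k`. Hence the `k`-th perturbed
term is at most `v_k ∏ γᵢ + ε_v v_max γ^k + v_max ε_γ k γ^(k-1)`, and summing with
`∑ γ^k = 1/(1-γ)` and `∑ k γ^(k-1) = 1/(1-γ)²` gives the bound.
-/

open Finset

section OrderedSemiring

variable {R : Type*} [CommSemiring R] [PartialOrder R] [IsOrderedRing R]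

theorem prod_range_le_pow {f : ℕ → R} {c : R} (h0 : ∀ i, 0 ≤ f i) (h : ∀ i, f i ≤ c) (k : ℕ) :
    ∏ i ∈ range k, f i ≤ c ^ k :=
  (prod_le_prod (s := range k) (fun i _ => h0 i) (fun i _ => h i)).trans_eq (by simp)

theorem prod_range_le_prod_range_add {a b : ℕ → R} {ε c : R} (ha : ∀ i, 0 ≤ a i)
    (hb : ∀ i, 0 ≤ b i) (hε : 0 ≤ ε) (hab : ∀ i, a i ≤ b i + ε) (hc : ∀ i, b i + ε ≤ c) (k : ℕ) :
    ∏ i ∈ range k, a i ≤ ∏ i ∈ range k, b i + ε * (k * c ^ (k - 1)) := by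
  have hbc i : b i ≤ c := le_trans (le_add_of_nonneg_right hε) (hc i)
  have hc0 : 0 ≤ c := (hb 0).trans (hbc 0)
  induction k with
  | zero => simp
  | succ n ih =>
    have hpow : (n : R) * c ^ (n - 1) * c = n * c ^ n := by
      cases n with
      | zero => simp
      | succ m => rw [Nat.add_sub_cancel, mul_assoc, ← pow_succ]
    calc ∏ i ∈ range (n + 1), a i
        ≤ (∏ i ∈ range n, b i + ε * (n * c ^ (n - 1))) * a n := by
          rw [prod_range_succ]; exact mul_le_mul_of_nonneg_right ih (ha n)
      _ ≤ (∏ i ∈ range n, b i) * (b n + ε) + ε * (n * c ^ (n - 1)) * c := by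
          rw [add_mul]
          exact add_le_add (mul_le_mul_of_nonneg_left (hab n) (prod_nonneg fun i _ => hb i))
            (mul_le_mul_of_nonneg_left ((hab n).trans (hc n)) (by positivity))
      _ ≤ ∏ i ∈ range (n + 1), b i + ε * c ^ n + ε * (n * c ^ (n - 1)) * c := by
          rw [prod_range_succ, mul_add, mul_comm _ ε]
          gcongr
          exact prod_range_le_pow hb hbc n
      _ = ∏ i ∈ range (n + 1), b i + ε * ((n + 1 : ℕ) * c ^ (n + 1 - 1)) := by
          rw [mul_assoc ε, hpow, Nat.add_sub_cancel]
          push_cast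
          ring

theorem mul_le_mul_add_of_le_add {x x' p p' e d M P : R} (hx : 0 ≤ x) (hxM : x ≤ M)
    (hp' : 0 ≤ p') (hp'P : p' ≤ P) (he : 0 ≤ e) (hd : 0 ≤ d) (hxx' : x' ≤ x + e)
    (hpp' : p' ≤ p + d) :
    x' * p' ≤ x * p + e * P + M * d :=
  calc x' * p' ≤ (x + e) * p' := mul_le_mul_of_nonneg_right hxx' hp'
    _ = x * p' + e * p' := add_mul ..
    _ ≤ x * (p + d) + e * P := by gcongr
    _ ≤ x * p + e * P + M * d := by
      rw [mul_add, add_right_comm]; gcongr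

end OrderedSemiring

theorem hasSum_coe_mul_pow_pred {𝕜 : Type*} [NormedDivisionRing 𝕜] {r : 𝕜} (hr : ‖r‖ < 1) :
    HasSum (fun k : ℕ => k * r ^ (k - 1)) (1 / (1 - r) ^ 2) := by
  rw [← hasSum_nat_add_iff' 1]
  simpa using hasSum_choose_mul_geometric_of_norm_lt_one 1 hr

theorem stmt_3 (γ εv εγ vmax : ℝ) (hγ0 : 0 ≤ γ) (hγ1 : γ < 1)
    (hεv : 0 ≤ εv) (hεγ : 0 ≤ εγ) (hvmax : 0 ≤ vmax)
    (v g vh gh : ℕ → ℝ)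
    (hv0 : ∀ k, 0 ≤ v k) (hv1 : ∀ k, v k ≤ vmax * (1 - γ))
    (hg0 : ∀ k, 0 ≤ g k) (hg1 : ∀ k, g k + εγ ≤ γ)
    (hvh0 : ∀ k, 0 ≤ vh k) (hvh1 : ∀ k, vh k ≤ v k + εv * vmax)
    (hgh0 : ∀ k, 0 ≤ gh k) (hgh1 : ∀ k, gh k ≤ g k + εγ) :
    (∑' k : ℕ, vh k * ∏ i ∈ Finset.range k, gh i) ≤
      (∑' k : ℕ, v k * ∏ i ∈ Finset.range k, g i) +
        εv * vmax / (1 - γ) + εγ * vmax / (1 - γ) ^ 2 := by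
  have hvmax' k : v k ≤ vmax := (hv1 k).trans (mul_le_of_le_one_right hvmax (by linarith))
  have hg k : g k ≤ γ := by linarith [hg1 k]
  have hgh k : gh k ≤ γ := (hgh1 k).trans (hg1 k)
  have hgeom := hasSum_geometric_of_lt_one hγ0 hγ1
  have hgeom_deriv := hasSum_coe_mul_pow_pred (r := γ) (by rwa [Real.norm_of_nonneg hγ0])
  have hsum : Summable fun k => v k * ∏ i ∈ range k, g i :=
    Summable.of_nonneg_of_le (fun k => mul_nonneg (hv0 k) (prod_nonneg fun i _ => hg0 i))
      (fun k => mul_le_mul (hvmax' k) (prod_range_le_pow hg0 hg k)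
        (prod_nonneg fun i _ => hg0 i) hvmax)
      (hgeom.summable.mul_left vmax)
  have hdom := (hsum.hasSum.add (hgeom.mul_left (εv * vmax))).add
    ((hgeom_deriv.mul_left εγ).mul_left vmax)
  have hterm k : vh k * ∏ i ∈ range k, gh i ≤ v k * ∏ i ∈ range k, g i + εv * vmax * γ ^ k +
      vmax * (εγ * (k * γ ^ (k - 1))) :=
    mul_le_mul_add_of_le_add (hv0 k) (hvmax' k) (prod_nonneg fun i _ => hgh0 i)
      (prod_range_le_pow hgh0 hgh k) (by positivity) (by positivity) (hvh1 k)
      (prod_range_le_prod_range_add hgh0 hg0 hεγ hgh1 hg1 k)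
  have hsum_hat : Summable fun k => vh k * ∏ i ∈ range k, gh i :=
    Summable.of_nonneg_of_le (fun k => mul_nonneg (hvh0 k) (prod_nonneg fun i _ => hgh0 i))
      hterm hdom.summable
  calc ∑' k, vh k * ∏ i ∈ range k, gh i
      ≤ ∑' k, v k * ∏ i ∈ range k, g i + εv * vmax * (1 - γ)⁻¹ +
          vmax * (εγ * (1 / (1 - γ) ^ 2)) := hasSum_le hterm hsum_hat.hasSum hdom
    _ = _ := by ring
end

section
/- (Lower perturbation bound for SMDP value estimates.) Under the same hypotheses as the upper bound but with v̂_k ≥ v_k − ε_v·v_max and γ̂_k ≥ γ_k − ε_γ (and v̂_k, γ̂_k ≥ 0), one has ∑_{k=0}^∞ v̂_k ∏_{i=0}^{k-1} γ̂_i ≥ ∑_{k=0}^∞ v_k ∏_{i=0}^{k-1} γ_i − ε_v·v_max/(1−γ) − ε_γ·v_max/(1−γ)². -/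
/-!
Clip the perturbed data from above by the exact data, `w = min v̂ v` and `b = min γ̂ γ`; by
monotonicity the clipped discounted sum is at most the perturbed one. The clipped data lie in the
same boxes as the exact data and differ from them by at most `ε_v v_max` and `ε_γ`. Writing
`vA - wB = (v - w) A + w (A - B)` for the products `A, B` of the discount factors, the first term
is at most `ε_v v_max γ^k`, and the telescoping estimate `A - B ≤ ε_γ k γ^(k-1)` bounds the second;
summing, `∑ γ^k = 1/(1-γ)` and `∑ k γ^(k-1) = 1/(1-γ)^2`.
-/

open Finset

theorem hasSum_coe_mul_pow_sub_one {𝕜 : Type*} [NormedDivisionRing 𝕜] [HasSummableGeomSeries 𝕜]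
    {r : 𝕜} (hr : ‖r‖ < 1) :
    HasSum (fun n : ℕ ↦ (n : 𝕜) * r ^ (n - 1)) (1 / (1 - r) ^ 2) := by
  rw [← hasSum_nat_add_iff' 1]
  simpa using hasSum_choose_mul_geometric_of_norm_lt_one 1 hr

theorem prod_range_le_pow_s4 {g : ℕ → ℝ} {γ : ℝ} (hg0 : ∀ i, 0 ≤ g i) (hgγ : ∀ i, g i ≤ γ)
    (n : ℕ) : ∏ i ∈ range n, g i ≤ γ ^ n := by
  simpa using prod_le_prod (s := range n) (fun i _ ↦ hg0 i) (fun i _ ↦ hgγ i)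

theorem summable_mul_prod_range {v g : ℕ → ℝ} {γ M : ℝ} (hγ1 : γ < 1)
    (hv0 : ∀ k, 0 ≤ v k) (hvM : ∀ k, v k ≤ M) (hg0 : ∀ i, 0 ≤ g i) (hgγ : ∀ i, g i ≤ γ) :
    Summable (fun k ↦ v k * ∏ i ∈ range k, g i) := by
  have hγ0 : 0 ≤ γ := (hg0 0).trans (hgγ 0)
  refine ((summable_geometric_of_lt_one hγ0 hγ1).mul_left M).of_nonneg_of_le
    (fun k ↦ mul_nonneg (hv0 k) (prod_nonneg fun i _ ↦ hg0 i)) fun k ↦ ?_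
  exact mul_le_mul (hvM k) (prod_range_le_pow_s4 hg0 hgγ k) (prod_nonneg fun i _ ↦ hg0 i)
    ((hv0 k).trans (hvM k))

theorem prod_range_sub_prod_range_le {a b : ℕ → ℝ} {γ ε : ℝ} (hε : 0 ≤ ε)
    (ha0 : ∀ i, 0 ≤ a i) (haγ : ∀ i, a i ≤ γ) (hb0 : ∀ i, 0 ≤ b i) (hbγ : ∀ i, b i ≤ γ)
    (hab : ∀ i, a i - b i ≤ ε) (n : ℕ) :
    ∏ i ∈ range n, a i - ∏ i ∈ range n, b i ≤ ε * (n * γ ^ (n - 1)) := by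
  induction n with
  | zero => simp
  | succ n ih =>
    set A := ∏ i ∈ range n, a i
    set B := ∏ i ∈ range n, b i
    have hγ0 : 0 ≤ γ := (ha0 0).trans (haγ 0)
    have hB0 : 0 ≤ B := prod_nonneg fun i _ ↦ hb0 i
    have hBγ : B ≤ γ ^ n := prod_range_le_pow_s4 hb0 hbγ n
    have hshift : (n : ℝ) * γ ^ (n - 1) * γ + γ ^ n = (n + 1 : ℕ) * γ ^ n := by
      cases n with
      | zero => simp
      | succ m => push_cast; ring
    calc ∏ i ∈ range (n + 1), a i - ∏ i ∈ range (n + 1), b i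
        = (A - B) * a n + B * (a n - b n) := by
          rw [prod_range_succ, prod_range_succ]; ring
      _ ≤ ε * (n * γ ^ (n - 1)) * γ + γ ^ n * ε := by
          have hhead : (A - B) * a n ≤ ε * (n * γ ^ (n - 1)) * γ :=
            mul_le_mul ih (haγ n) (ha0 n) (by positivity)
          have hlast : B * (a n - b n) ≤ γ ^ n * ε :=
            (mul_le_mul_of_nonneg_left (hab n) hB0).trans (mul_le_mul_of_nonneg_right hBγ hε)
          linarith
      _ = ε * ((n + 1 : ℕ) * γ ^ (n + 1 - 1)) := by
          rw [Nat.add_sub_cancel, ← hshift]; ring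

theorem mul_prod_range_sub_mul_prod_range_le {γ εv εg M : ℝ} {v w a b : ℕ → ℝ}
    (hεv : 0 ≤ εv) (hεg : 0 ≤ εg) (hw0 : ∀ k, 0 ≤ w k) (hwM : ∀ k, w k ≤ M)
    (hvw : ∀ k, v k - w k ≤ εv) (ha0 : ∀ i, 0 ≤ a i) (haγ : ∀ i, a i ≤ γ)
    (hb0 : ∀ i, 0 ≤ b i) (hbγ : ∀ i, b i ≤ γ) (hab : ∀ i, a i - b i ≤ εg) (k : ℕ) :
    v k * ∏ i ∈ range k, a i - w k * ∏ i ∈ range k, b i ≤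
      εv * γ ^ k + εg * M * (k * γ ^ (k - 1)) := by
  set A := ∏ i ∈ range k, a i
  set B := ∏ i ∈ range k, b i
  have hγ0 : 0 ≤ γ := (ha0 0).trans (haγ 0)
  have hA0 : 0 ≤ A := prod_nonneg fun i _ ↦ ha0 i
  have hAγ : A ≤ γ ^ k := prod_range_le_pow_s4 ha0 haγ k
  have hAB := prod_range_sub_prod_range_le hεg ha0 haγ hb0 hbγ hab k
  have hvalue : (v k - w k) * A ≤ εv * γ ^ k :=
    (mul_le_mul_of_nonneg_right (hvw k) hA0).trans (mul_le_mul_of_nonneg_left hAγ hεv)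
  have hdiscount : w k * (A - B) ≤ M * (εg * (k * γ ^ (k - 1))) :=
    (mul_le_mul_of_nonneg_left hAB (hw0 k)).trans
      (mul_le_mul_of_nonneg_right (hwM k) (by positivity))
  calc v k * A - w k * B = (v k - w k) * A + w k * (A - B) := by ring
    _ ≤ _ := by linarith

theorem tsum_mul_prod_range_le_tsum_add {γ εv εg M : ℝ} {v w a b : ℕ → ℝ} (hγ1 : γ < 1)
    (hεv : 0 ≤ εv) (hεg : 0 ≤ εg) (hv0 : ∀ k, 0 ≤ v k) (hvM : ∀ k, v k ≤ M)
    (hw0 : ∀ k, 0 ≤ w k) (hwM : ∀ k, w k ≤ M) (hvw : ∀ k, v k - w k ≤ εv)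
    (ha0 : ∀ i, 0 ≤ a i) (haγ : ∀ i, a i ≤ γ) (hb0 : ∀ i, 0 ≤ b i) (hbγ : ∀ i, b i ≤ γ)
    (hab : ∀ i, a i - b i ≤ εg) :
    ∑' k, v k * ∏ i ∈ range k, a i ≤
      ∑' k, w k * ∏ i ∈ range k, b i + εv / (1 - γ) + εg * M / (1 - γ) ^ 2 := by
  have hγ0 : 0 ≤ γ := (ha0 0).trans (haγ 0)
  have hgeom := (hasSum_geometric_of_lt_one hγ0 hγ1).mul_left εv
  have hcoe := (hasSum_coe_mul_pow_sub_one (r := γ) (by rwa [Real.norm_of_nonneg hγ0])).mul_left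
    (εg * M)
  have hsum := ((summable_mul_prod_range hγ1 hw0 hwM hb0 hbγ).hasSum.add hgeom).add hcoe
  rw [div_eq_mul_inv εv, ← mul_one_div (εg * M)]
  refine hasSum_le (fun k ↦ ?_) (summable_mul_prod_range hγ1 hv0 hvM ha0 haγ).hasSum hsum
  have := mul_prod_range_sub_mul_prod_range_le hεv hεg hw0 hwM hvw ha0 haγ hb0 hbγ hab k
  linarith

theorem sub_min_le_of_sub_le {x y ε : ℝ} (hε : 0 ≤ ε) (h : x - ε ≤ y) : x - min y x ≤ ε := by
  rcases le_total y x with hyx | hxy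
  · rw [min_eq_left hyx]; linarith
  · rw [min_eq_right hxy]; linarith

theorem stmt_4 (γ εv εγ vmax : ℝ) (hγ0 : 0 ≤ γ) (hγ1 : γ < 1)
    (hεv : 0 ≤ εv) (hεγ : 0 ≤ εγ) (hvmax : 0 ≤ vmax)
    (v g vh gh : ℕ → ℝ)
    (hv0 : ∀ k, 0 ≤ v k) (hv1 : ∀ k, v k ≤ vmax * (1 - γ))
    (hg0 : ∀ k, 0 ≤ g k) (hg1 : ∀ k, g k ≤ γ)
    (hvh0 : ∀ k, 0 ≤ vh k) (hvh1 : ∀ k, v k - εv * vmax ≤ vh k)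
    (hgh0 : ∀ k, 0 ≤ gh k) (hgh1 : ∀ k, g k - εγ ≤ gh k)
    (hsum : Summable (fun k : ℕ => vh k * ∏ i ∈ Finset.range k, gh i)) :
    (∑' k : ℕ, v k * ∏ i ∈ Finset.range k, g i) -
        εv * vmax / (1 - γ) - εγ * vmax / (1 - γ) ^ 2 ≤
      ∑' k : ℕ, vh k * ∏ i ∈ Finset.range k, gh i := by
  set w := fun k ↦ min (vh k) (v k)
  set b := fun i ↦ min (gh i) (g i)
  have hv_le : ∀ k, v k ≤ vmax := fun k ↦ (hv1 k).trans (by nlinarith)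
  have hw0 : ∀ k, 0 ≤ w k := fun k ↦ le_min (hvh0 k) (hv0 k)
  have hw_le : ∀ k, w k ≤ vmax := fun k ↦ (min_le_right _ _).trans (hv_le k)
  have hb0 : ∀ i, 0 ≤ b i := fun i ↦ le_min (hgh0 i) (hg0 i)
  have hb_le : ∀ i, b i ≤ γ := fun i ↦ (min_le_right _ _).trans (hg1 i)
  have hperturb := tsum_mul_prod_range_le_tsum_add hγ1 (mul_nonneg hεv hvmax) hεγ hv0 hv_le
    hw0 hw_le (fun k ↦ sub_min_le_of_sub_le (mul_nonneg hεv hvmax) (hvh1 k)) hg0 hg1 hb0 hb_le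
    (fun i ↦ sub_min_le_of_sub_le hεγ (hgh1 i))
  have hclip : ∑' k, w k * ∏ i ∈ range k, b i ≤ ∑' k, vh k * ∏ i ∈ range k, gh i :=
    (summable_mul_prod_range hγ1 hw0 hw_le hb0 hb_le).tsum_le_tsum
      (fun k ↦ mul_le_mul (min_le_left _ _)
        (prod_le_prod (fun i _ ↦ hb0 i) fun i _ ↦ min_le_left _ _)
        (prod_nonneg fun i _ ↦ hb0 i) (hvh0 k)) hsum
  linarith
end
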